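/- arXiv:2407.09692 — 3 statements merged into one kernel-verified Lean document; each statement's English description precedes it below -/
import Mathlib

section
/- For every integer k ≥ 2, the subdivided star T_k (obtained from the star K_{1,k} by subdividing every edge exactly once), which has order n = 2k+1, satisfies γ^IOC(T_k) = 2k = (2k/(2k+1))·n. -/
/-- `S` is an identifying open code of `G`: a total dominating set that is also a
separating open code. -/
def IsIOC {V : Type*} (G : SimpleGraph V) (S : Set V) : Prop :=
  (∀ v : V, ∃ u ∈ S, G.Adj v u) ∧
  ∀ u v : V, u ≠ v → G.neighborSet u ∩ S ≠ G.neighborSet v ∩ S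

/-- The identifying open code number `γ^IOC(G)`. -/
noncomputable def iocNumber {V : Type*} [Fintype V] (G : SimpleGraph V) : ℕ :=
  sInf {n | ∃ S : Finset V, IsIOC G ↑S ∧ S.card = n}

/-- The subdivided star `T_k`: the star `K_{1,k}` with every edge subdivided once.
`none` is the center, `some (i, false)` the support vertices, `some (i, true)` the leaves. -/
def subdividedStar (k : ℕ) : SimpleGraph (Option (Fin k × Bool)) :=
  SimpleGraph.fromRel (fun a b =>
    (a = none ∧ ∃ i, b = some (i, false)) ∨
    (∃ i, a = some (i, false) ∧ b = some (i, true)))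

/-!
Every support vertex `(i, false)` is the only neighbour of its leaf, so it lies in every IO-code.
If some leaf `(i, true)` is missing from a code, the centre must be in it to dominate `(i, false)`,
and then every other leaf `(j, true)` is needed to separate `(i, false)` from `(j, false)`. So an
IO-code misses at most one vertex. Conversely, all vertices but the centre form an IO-code: a
non-central vertex then sees exactly its partner on its branch, while the centre sees the `k ≥ 2`
support vertices.
-/

lemma iocNumber_eq_card {V : Type*} [Fintype V] {G : SimpleGraph V} {S : Finset V}
    (hS : IsIOC G S) (hmin : ∀ T : Finset V, IsIOC G T → S.card ≤ T.card) :
    iocNumber G = S.card :=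
  le_antisymm (Nat.sInf_le ⟨S, hS, rfl⟩)
    (le_csInf ⟨_, S, hS, rfl⟩ fun _ ⟨T, hT, hn⟩ => hn ▸ hmin T hT)

lemma IsIOC.mem_of_neighborSet_eq_singleton {V : Type*} {G : SimpleGraph V} {S : Set V}
    (hS : IsIOC G S) {v u : V} (h : G.neighborSet v = {u}) : u ∈ S := by
  obtain ⟨w, hw, hvw⟩ := hS.1 v
  have hwu : w = u := by rw [← Set.mem_singleton_iff, ← h]; exact hvw
  exact hwu ▸ hw

namespace SubdividedStar

variable {k : ℕ}

lemma neighborSet_center :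
    (subdividedStar k).neighborSet none = Set.range fun i => some (i, false) := by
  ext u
  rcases u with _ | ⟨i, _ | _⟩ <;> simp [subdividedStar]

lemma neighborSet_support (i : Fin k) :
    (subdividedStar k).neighborSet (some (i, false)) = {none, some (i, true)} := by
  ext u
  rcases u with _ | ⟨j, _ | _⟩ <;> simp [subdividedStar, eq_comm]

lemma neighborSet_leaf (i : Fin k) :
    (subdividedStar k).neighborSet (some (i, true)) = {some (i, false)} := by
  ext u
  rcases u with _ | ⟨j, _ | _⟩ <;> simp [subdividedStar, eq_comm]

lemma neighborSet_some_inter_compl_center (i : Fin k) (b : Bool) :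
    (subdividedStar k).neighborSet (some (i, b)) ∩ {none}ᶜ = {some (i, !b)} := by
  cases b
  · rw [neighborSet_support, Set.insert_inter_of_notMem (by simp)]
    simp
  · simp [neighborSet_leaf]

lemma nontrivial_neighborSet_center_inter_compl_center (hk : 2 ≤ k) :
    ((subdividedStar k).neighborSet none ∩ {none}ᶜ).Nontrivial := by
  refine ⟨some (⟨0, by omega⟩, false), ?_, some (⟨1, by omega⟩, false), ?_, by simp⟩ <;>
    simp [neighborSet_center]

lemma isIOC_compl_center (hk : 2 ≤ k) : IsIOC (subdividedStar k) {none}ᶜ := by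
  have hcenter := nontrivial_neighborSet_center_inter_compl_center hk
  refine ⟨fun v => ?_, ?_⟩
  · rcases v with _ | ⟨i, b⟩
    · obtain ⟨u, hadj, hu⟩ := hcenter.nonempty
      exact ⟨u, hu, hadj⟩
    · obtain ⟨hadj, hu⟩ := (neighborSet_some_inter_compl_center i b).ge rfl
      exact ⟨_, hu, hadj⟩
  · rintro (_ | ⟨i, b⟩) (_ | ⟨j, c⟩) huv h
    · exact huv rfl
    · rw [neighborSet_some_inter_compl_center] at h
      exact hcenter.not_subsingleton (h ▸ Set.subsingleton_singleton)
    · rw [neighborSet_some_inter_compl_center] at h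
      exact hcenter.not_subsingleton (h ▸ Set.subsingleton_singleton)
    · rw [neighborSet_some_inter_compl_center, neighborSet_some_inter_compl_center,
        Set.singleton_eq_singleton_iff, Option.some.injEq, Prod.mk.injEq, Bool.not_inj_iff] at h
      exact huv (by rw [h.1, h.2])

variable {S : Set (Option (Fin k × Bool))}

lemma support_mem (hS : IsIOC (subdividedStar k) S) (i : Fin k) : some (i, false) ∈ S :=
  hS.mem_of_neighborSet_eq_singleton (neighborSet_leaf i)

lemma center_mem_of_leaf_notMem (hS : IsIOC (subdividedStar k) S) {i : Fin k}
    (hi : some (i, true) ∉ S) : none ∈ S := by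
  obtain ⟨w, hw, hadj⟩ := hS.1 (some (i, false))
  have hw' : w ∈ ({none, some (i, true)} : Set _) := neighborSet_support i ▸ hadj
  rcases hw' with rfl | rfl
  · exact hw
  · exact absurd hw hi

lemma leaf_mem_of_leaf_notMem (hS : IsIOC (subdividedStar k) S) {i j : Fin k}
    (hi : some (i, true) ∉ S) (hji : j ≠ i) : some (j, true) ∈ S := by
  by_contra hj
  apply hS.2 (some (i, false)) (some (j, false)) (by simp [hji.symm])
  rw [neighborSet_support, neighborSet_support, Set.pair_comm, Set.insert_inter_of_notMem hi,
    Set.pair_comm, Set.insert_inter_of_notMem hj]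

lemma exists_compl_singleton_subset (hS : IsIOC (subdividedStar k) S) :
    ∃ x, {x}ᶜ ⊆ S := by
  by_cases hleaves : ∀ i, some (i, true) ∈ S
  · refine ⟨none, ?_⟩
    rintro (_ | ⟨i, _ | _⟩) hx
    · exact absurd rfl hx
    · exact support_mem hS i
    · exact hleaves i
  · obtain ⟨i, hi⟩ := not_forall.mp hleaves
    refine ⟨some (i, true), ?_⟩
    rintro (_ | ⟨j, _ | _⟩) hx
    · exact center_mem_of_leaf_notMem hS hi
    · exact support_mem hS j
    · exact leaf_mem_of_leaf_notMem hS hi (by rintro rfl; exact hx rfl)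

lemma card_compl_center_le {T : Finset (Option (Fin k × Bool))}
    (hT : IsIOC (subdividedStar k) T) :
    ({none}ᶜ : Finset (Option (Fin k × Bool))).card ≤ T.card := by
  obtain ⟨x, hx⟩ := exists_compl_singleton_subset hT
  calc ({none}ᶜ : Finset (Option (Fin k × Bool))).card = ({x}ᶜ : Finset _).card := by
        simp only [Finset.card_compl, Finset.card_singleton]
    _ ≤ T.card := Finset.card_le_card (by simpa [← Finset.coe_subset] using hx)

end SubdividedStar

theorem stmt0 (k : ℕ) (hk : 2 ≤ k) :
    Fintype.card (Option (Fin k × Bool)) = 2 * k + 1 ∧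
    iocNumber (subdividedStar k) = 2 * k := by
  have hcard : Fintype.card (Option (Fin k × Bool)) = 2 * k + 1 := by
    simp only [Fintype.card_option, Fintype.card_prod, Fintype.card_fin, Fintype.card_bool]
    ring
  have hS : IsIOC (subdividedStar k) ↑({none}ᶜ : Finset (Option (Fin k × Bool))) := by
    simpa using SubdividedStar.isIOC_compl_center hk
  refine ⟨hcard, ?_⟩
  rw [iocNumber_eq_card hS fun _ => SubdividedStar.card_compl_center_le, Finset.card_compl,
    Finset.card_singleton, hcard, Nat.add_sub_cancel]
end

section
/- Let G be a graph with no 4-cycle, let e = uv be an edge of G lying on an induced cycle, and let G' = G − e. If S is an identifying open code of G', then S is also an identifying open code of G. -/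
/-!
Deleting edges only shrinks neighbourhoods, so total domination passes from `G − e` to `G`.
If `x ≠ y` had the same `S`-neighbourhood in `G` but not in `G − e`, some `w ∈ S` would be
a `G`-neighbour of both, joined to one of them, say `y`, only by the deleted edge. A code
neighbour `s` of `y` in `G − e` is then a second common neighbour of `x` and `y`, and
`x s y w` is a 4-cycle.
-/

namespace SimpleGraph

variable {V : Type*} {G H : SimpleGraph V} {S : Set V}

lemma commonNeighbors_subsingleton_of_no4
    (no4 : ∀ a b c d : V, G.Adj a b → G.Adj b c → G.Adj c d → G.Adj d a → a = c ∨ b = d)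
    {x y : V} (hxy : x ≠ y) : (G.commonNeighbors x y).Subsingleton := by
  rintro s ⟨hxs, hys⟩ w ⟨hxw, hyw⟩
  exact (no4 x s y w hxs hys.symm hyw hxw.symm).resolve_left hxy

lemma adj_of_adj_of_neighborSet_inter_eq
    (no4 : ∀ a b c d : V, G.Adj a b → G.Adj b c → G.Adj c d → G.Adj d a → a = c ∨ b = d)
    (hle : H ≤ G) (hdom : ∀ z : V, ∃ s ∈ S, H.Adj z s) {x y w : V} (hxy : x ≠ y)
    (hG : G.neighborSet x ∩ S = G.neighborSet y ∩ S) (hw : w ∈ S) (hxw : H.Adj x w) :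
    H.Adj y w := by
  by_contra hyw
  have hyw' : G.Adj y w := ((Set.ext_iff.mp hG w).mp ⟨hle hxw, hw⟩).1
  obtain ⟨s, hs, hys⟩ := hdom y
  have hxs : G.Adj x s := ((Set.ext_iff.mp hG s).mpr ⟨hle hys, hs⟩).1
  have hsw : s = w :=
    commonNeighbors_subsingleton_of_no4 no4 hxy ⟨hxs, hle hys⟩ ⟨hle hxw, hyw'⟩
  exact hyw (hsw ▸ hys)

lemma _root_.IsIOC.of_le
    (no4 : ∀ a b c d : V, G.Adj a b → G.Adj b c → G.Adj c d → G.Adj d a → a = c ∨ b = d)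
    (hle : H ≤ G) (hS : IsIOC H S) : IsIOC G S := by
  obtain ⟨hdom, hsep⟩ := hS
  refine ⟨fun z => (hdom z).imp fun _ ⟨hs, hzs⟩ => ⟨hs, hle hzs⟩, fun x y hxy hG => ?_⟩
  refine hsep x y hxy (Set.ext fun w => ⟨?_, ?_⟩)
  · rintro ⟨hxw, hw⟩
    exact ⟨adj_of_adj_of_neighborSet_inter_eq no4 hle hdom hxy hG hw hxw, hw⟩
  · rintro ⟨hyw, hw⟩
    exact ⟨adj_of_adj_of_neighborSet_inter_eq no4 hle hdom hxy.symm hG.symm hw hyw, hw⟩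

end SimpleGraph

theorem stmt12_general {V : Type*} (G : SimpleGraph V)
    (no4 : ∀ a b c d : V, G.Adj a b → G.Adj b c → G.Adj c d → G.Adj d a →
      a = c ∨ b = d)
    (u v : V)
    (c : G.Walk u u)
    (S : Set V) (hS : IsIOC (G.deleteEdges {s(u, v)}) S) :
    IsIOC G S :=
  hS.of_le no4 (G.deleteEdges_le _)

theorem stmt12 {V : Type*} (G : SimpleGraph V)
    (no4 : ∀ a b c d : V, G.Adj a b → G.Adj b c → G.Adj c d → G.Adj d a →
      a = c ∨ b = d)
    (u v : V) (huv : G.Adj u v)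
    (c : G.Walk u u) (hc : c.IsCycle) (he : s(u, v) ∈ c.edges)
    (hind : ∀ x ∈ c.support, ∀ y ∈ c.support, G.Adj x y → s(x, y) ∈ c.edges)
    (S : Set V) (hS : IsIOC (G.deleteEdges {s(u, v)}) S) :
    IsIOC G S :=
  stmt12_general G no4 u v c S hS
end

section
/- For each p ≥ 3 with p ≠ 4, let G_p be the subcubic graph obtained from a cycle u_1u_2…u_pu_1 by attaching to each cycle vertex u_i a disjoint copy of the reduced subdivided star T_3*, identifying u_i with one of the leaves at distance 2 from its central vertex. Then G_p has order n = 6p, is open twin-free, contains no 4-cycle, and satisfies γ^IOC(G_p) = 5p = (5/6)·n. -/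
/-- The graph `G_p`: a cycle on the vertices `(i, 0)`, `i : Fin p`, with a copy of the
reduced subdivided star `T_3*` attached at each cycle vertex. In the copy at `i`,
the vertices `(i,0), (i,1), (i,2), (i,3), (i,4)` form the path `u_i v_i w_i x_i y_i`
and `(i,5)` is the leaf `z_i` adjacent to `w_i = (i,2)`. -/
def Gp (p : ℕ) : SimpleGraph (Fin p × Fin 6) :=
  SimpleGraph.fromRel (fun a b =>
    (a.2 = 0 ∧ b.2 = 0 ∧ (b.1 : ℕ) = ((a.1 : ℕ) + 1) % p) ∨
    (a.1 = b.1 ∧ ((a.2 = 0 ∧ b.2 = 1) ∨ (a.2 = 1 ∧ b.2 = 2) ∨ (a.2 = 2 ∧ b.2 = 3) ∨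
      (a.2 = 3 ∧ b.2 = 4) ∨ (a.2 = 2 ∧ b.2 = 5))))

namespace SimpleGraph

variable {V : Type*} {G : SimpleGraph V}

theorem neighborSet_inter_ne_of_mem {S : Set V} {u v w : V} (hw : w ∈ S)
    (h : ¬(G.Adj u w ↔ G.Adj v w)) : G.neighborSet u ∩ S ≠ G.neighborSet v ∩ S := fun huv =>
  h <| by simpa [hw] using Set.ext_iff.mp huv w

theorem IsIOC.neighborSet_ne {S : Set V} (hS : IsIOC G S) {u v : V} (huv : u ≠ v) :
    G.neighborSet u ≠ G.neighborSet v := fun h => hS.2 u v huv (by rw [h])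

theorem iocNumber_eq_of_isIOC [Fintype V] {n : ℕ} {S₀ : Finset V} (h₀ : IsIOC G S₀)
    (hcard : S₀.card = n) (hle : ∀ S : Finset V, IsIOC G S → n ≤ S.card) : iocNumber G = n :=
  le_antisymm (Nat.sInf_le ⟨S₀, h₀, hcard⟩)
    (le_csInf ⟨n, S₀, h₀, hcard⟩ fun _ ⟨S, hS, hSn⟩ => hSn ▸ hle S hS)

def NoFourCycle (G : SimpleGraph V) : Prop :=
  ∀ a b c d : V, G.Adj a b → G.Adj b c → G.Adj c d → G.Adj d a → a = c ∨ b = d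

end SimpleGraph

open SimpleGraph Finset

/-- The reduced subdivided star `T_3*`, numbered as each of its copies in `Gp`. -/
def reducedStar : SimpleGraph (Fin 6) :=
  SimpleGraph.fromRel fun m n =>
    (m = 0 ∧ n = 1) ∨ (m = 1 ∧ n = 2) ∨ (m = 2 ∧ n = 3) ∨ (m = 3 ∧ n = 4) ∨ (m = 2 ∧ n = 5)

instance : DecidableRel reducedStar.Adj := fun _ _ => decidable_of_iff _ (fromRel_adj _ _ _).symm

namespace reducedStar

theorem adj_zero_iff {n : Fin 6} : reducedStar.Adj 0 n ↔ n = 1 := by revert n; decide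

theorem degree_le (m : Fin 6) : reducedStar.degree m ≤ 3 := by revert m; decide

theorem noFourCycle : NoFourCycle reducedStar := by unfold NoFourCycle; decide

theorem exists_adj (m : Fin 6) : ∃ k, k ≠ 0 ∧ k ≠ 5 ∧ reducedStar.Adj m k := by revert m; decide

theorem exists_separating (m n : Fin 6) (hmn : m ≠ n) :
    ∃ k, k ≠ 5 ∧ ¬(reducedStar.Adj m k ↔ reducedStar.Adj n k) := by
  revert m n; decide

/-- Dominating the leaves `y = 4`, `z = 5` forces `x = 3`, `w = 2`; separating `x` from `z`
forces `y`, separating `v = 1` from `z` forces `u = 0`, and separating `w` from `y` forces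
`v` or `z`. -/
theorem five_le_card {s : Finset (Fin 6)} (hdom : ∀ m ≠ 0, ∃ k ∈ s, reducedStar.Adj m k)
    (hsep : ∀ m n, m ≠ 0 → n ≠ 0 → m ≠ n → ∃ k ∈ s, ¬(reducedStar.Adj m k ↔ reducedStar.Adj n k)) :
    5 ≤ s.card := by
  revert s; decide

end reducedStar

theorem Fin.val_eq_val_add_one_mod_iff {p : ℕ} {x y : Fin p} :
    (y : ℕ) = (x + 1) % p ↔ (x + 1 < p ∧ (y : ℕ) = x + 1) ∨ (x + 1 = p ∧ (y : ℕ) = 0) := by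
  rcases (Nat.succ_le_of_lt x.isLt).lt_or_eq with h | h
  · rw [Nat.mod_eq_of_lt h]; omega
  · rw [show (x : ℕ) + 1 = p from h, Nat.mod_self]; omega

namespace Gp

variable {p : ℕ}

theorem adj_iff (hp : 2 ≤ p) {a b : Fin p × Fin 6} : (Gp p).Adj a b ↔
    (a.2 = 0 ∧ b.2 = 0 ∧ ((b.1 : ℕ) = (a.1 + 1) % p ∨ (a.1 : ℕ) = (b.1 + 1) % p)) ∨
      (a.1 = b.1 ∧ reducedStar.Adj a.2 b.2) := by
  have hcycle : ∀ x y : Fin p, (y : ℕ) = (x + 1) % p → x ≠ y := fun x y h hxy => by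
    subst hxy; rw [Fin.val_eq_val_add_one_mod_iff] at h; omega
  simp only [Gp, reducedStar, fromRel_adj, ne_eq, Prod.ext_iff]
  constructor
  · rintro ⟨hab, (⟨ha, hb, h⟩ | ⟨h1, h⟩) | (⟨hb, ha, h⟩ | ⟨h1, h⟩)⟩
    · exact .inl ⟨ha, hb, .inl h⟩
    · exact .inr ⟨h1, fun h2 => hab ⟨h1, h2⟩, .inl h⟩
    · exact .inl ⟨ha, hb, .inr h⟩
    · exact .inr ⟨h1.symm, fun h2 => hab ⟨h1.symm, h2⟩, .inr h⟩
  · rintro (⟨ha, hb, h | h⟩ | ⟨h1, h2, h | h⟩)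
    · exact ⟨fun h' => hcycle _ _ h h'.1, .inl (.inl ⟨ha, hb, h⟩)⟩
    · exact ⟨fun h' => hcycle _ _ h h'.1.symm, .inr (.inl ⟨hb, ha, h⟩)⟩
    · exact ⟨fun h' => h2 h'.2, .inl (.inr ⟨h1, h⟩)⟩
    · exact ⟨fun h' => h2 h'.2, .inr (.inr ⟨h1.symm, h⟩)⟩

theorem adj_mk_mk_iff (hp : 2 ≤ p) {i : Fin p} {m n : Fin 6} :
    (Gp p).Adj (i, m) (i, n) ↔ reducedStar.Adj m n := by
  rw [adj_iff hp]
  refine ⟨?_, fun h => .inr ⟨rfl, h⟩⟩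
  rintro (⟨rfl, rfl, h | h⟩ | ⟨-, h⟩)
  all_goals first | exact h | (rw [Fin.val_eq_val_add_one_mod_iff] at h; omega)

theorem adj_iff_of_ne_zero (hp : 2 ≤ p) {i : Fin p} {m : Fin 6} (hm : m ≠ 0)
    {w : Fin p × Fin 6} : (Gp p).Adj (i, m) w ↔ w.1 = i ∧ reducedStar.Adj m w.2 := by
  rw [adj_iff hp]
  constructor
  · rintro (⟨rfl, -⟩ | ⟨rfl, h⟩)
    exacts [absurd rfl hm, ⟨rfl, h⟩]
  · rintro ⟨rfl, h⟩
    exact .inr ⟨rfl, h⟩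

theorem neighborSet_zero_subset [NeZero p] (hp : 2 ≤ p) (i : Fin p) :
    (Gp p).neighborSet (i, 0) ⊆ {(i + 1, 0), (i - 1, 0), (i, 1)} := by
  have val_add_one : ∀ j : Fin p, ((j + 1 : Fin p) : ℕ) = (j + 1) % p := fun j => by
    rw [Fin.val_add, Fin.val_one', Nat.add_mod_mod]
  rintro ⟨j, n⟩ h
  simp only [mem_neighborSet, adj_iff hp, reducedStar.adj_zero_iff] at h
  simp only [Set.mem_insert_iff, Set.mem_singleton_iff, Prod.ext_iff]
  rcases h with ⟨-, rfl, h | h⟩ | ⟨rfl, rfl⟩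
  · exact .inl ⟨Fin.ext (h.trans (val_add_one i).symm), rfl⟩
  · exact .inr (.inl ⟨eq_sub_of_add_eq (Fin.ext ((val_add_one j).trans h.symm)), rfl⟩)
  · exact .inr (.inr ⟨rfl, rfl⟩)

theorem ncard_neighborSet_le (hp : 2 ≤ p) (v : Fin p × Fin 6) :
    ((Gp p).neighborSet v).ncard ≤ 3 := by
  obtain ⟨i, m⟩ := v
  by_cases hm : m = 0
  · subst hm
    have : NeZero p := ⟨by omega⟩
    calc ((Gp p).neighborSet (i, 0)).ncard
        ≤ ({(i + 1, 0), (i - 1, 0), (i, 1)} : Set (Fin p × Fin 6)).ncard :=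
          Set.ncard_le_ncard (neighborSet_zero_subset hp i)
      _ ≤ 3 := (Set.ncard_insert_le _ _).trans
          (Nat.succ_le_succ ((Set.ncard_insert_le _ _).trans (by simp)))
  · have : (Gp p).neighborSet (i, m) = Prod.mk i '' reducedStar.neighborSet m := by
      ext ⟨j, n⟩
      simp [adj_iff_of_ne_zero hp hm, eq_comm, and_comm]
    calc ((Gp p).neighborSet (i, m)).ncard ≤ (reducedStar.neighborSet m).ncard :=
          this ▸ Set.ncard_image_le (Set.toFinite _)
      _ = reducedStar.degree m := by
          rw [Set.ncard_eq_toFinset_card', Set.toFinset_card, card_neighborSet_eq_degree]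
      _ ≤ 3 := reducedStar.degree_le m

theorem noFourCycle (hp : 2 ≤ p) (hp4 : p ≠ 4) : NoFourCycle (Gp p) := by
  intro a b c d h₁ h₂ h₃ h₄
  rw [adj_iff hp] at h₁ h₂ h₃ h₄
  rcases h₁ with ⟨ha, hb, h₁⟩ | ⟨hab, t₁⟩ <;> rcases h₂ with ⟨hb', hc, h₂⟩ | ⟨hbc, t₂⟩ <;>
    rcases h₃ with ⟨hc', hd, h₃⟩ | ⟨hcd, t₃⟩ <;> rcases h₄ with ⟨hd', ha', h₄⟩ | ⟨hda, t₄⟩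
  case inr.inr.inr.inr =>
    simpa only [Prod.ext_iff, hab, hbc, hcd, true_and] using
      reducedStar.noFourCycle _ _ _ _ t₁ t₂ t₃ t₄
  -- Otherwise the walk either runs around the cycle, which would force `p = 4`, or enters a
  -- copy of `T_3*` through its root and has to leave it the same way.
  all_goals
    try replace t₁ := t₁.ne
    try replace t₂ := t₂.ne
    try replace t₃ := t₃.ne
    try replace t₄ := t₄.ne
    simp only [Fin.val_eq_val_add_one_mod_iff, Prod.ext_iff, Fin.ext_iff,
      ne_eq, Fin.val_zero] at *
    omega

theorem isIOC (hp : 2 ≤ p) : IsIOC (Gp p) ↑(univ ×ˢ univ.erase 5 : Finset (Fin p × Fin 6)) := by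
  constructor
  · rintro ⟨i, m⟩
    obtain ⟨k, -, hk5, hk⟩ := reducedStar.exists_adj m
    exact ⟨(i, k), by simp [hk5], (adj_mk_mk_iff hp).2 hk⟩
  · rintro ⟨i, m⟩ ⟨j, n⟩ hne
    by_cases hij : i = j
    · subst hij
      obtain ⟨k, hk5, hk⟩ := reducedStar.exists_separating m n fun h => hne (h ▸ rfl)
      exact neighborSet_inter_ne_of_mem (w := (i, k)) (by simp [hk5])
        (by rwa [adj_mk_mk_iff hp, adj_mk_mk_iff hp])
    · obtain ⟨k, hk0, hk5, hk⟩ := reducedStar.exists_adj m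
      refine neighborSet_inter_ne_of_mem (w := (i, k)) (by simp [hk5]) fun h => ?_
      have hjk := ((Gp p).adj_symm (h.1 ((adj_mk_mk_iff hp).2 hk)))
      exact hij ((adj_iff_of_ne_zero hp hk0).1 hjk).1.symm

theorem card_le_of_isIOC (hp : 2 ≤ p) {S : Finset (Fin p × Fin 6)} (hS : IsIOC (Gp p) ↑S) :
    5 * p ≤ S.card := by
  have slice (i : Fin p) : 5 ≤ (S.filter (·.1 = i)).card := by
    refine (reducedStar.five_le_card (s := (S.filter (·.1 = i)).image Prod.snd) ?_ ?_).trans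
      card_image_le
    · intro m hm
      obtain ⟨w, hwS, hw⟩ := hS.1 (i, m)
      rw [adj_iff_of_ne_zero hp hm] at hw
      exact ⟨w.2, mem_image.2 ⟨w, mem_filter.2 ⟨hwS, hw.1⟩, rfl⟩, hw.2⟩
    · intro m n hm hn hmn
      by_contra! h
      refine hS.2 (i, m) (i, n) (by simpa using hmn) (Set.ext fun w => ?_)
      simp only [Set.mem_inter_iff, mem_neighborSet, adj_iff_of_ne_zero hp hm,
        adj_iff_of_ne_zero hp hn, mem_coe]
      exact and_congr_left fun hwS => and_congr_right fun hwi =>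
        h w.2 (mem_image.2 ⟨w, mem_filter.2 ⟨hwS, hwi⟩, rfl⟩)
  calc 5 * p = ∑ _i : Fin p, 5 := by simp [mul_comm]
    _ ≤ ∑ i, (S.filter (·.1 = i)).card := sum_le_sum fun i _ => slice i
    _ = S.card := (card_eq_sum_card_fiberwise fun _ _ => mem_coe.2 (mem_univ _)).symm

end Gp

theorem stmt15 (p : ℕ) (hp : 3 ≤ p) (hp4 : p ≠ 4) :
    Fintype.card (Fin p × Fin 6) = 6 * p ∧
    (∀ v : Fin p × Fin 6, ((Gp p).neighborSet v).ncard ≤ 3) ∧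
    (∀ u v : Fin p × Fin 6, u ≠ v → (Gp p).neighborSet u ≠ (Gp p).neighborSet v) ∧
    (∀ a b c d : Fin p × Fin 6, (Gp p).Adj a b → (Gp p).Adj b c → (Gp p).Adj c d →
      (Gp p).Adj d a → a = c ∨ b = d) ∧
    iocNumber (Gp p) = 5 * p := by
  have hp2 : 2 ≤ p := by omega
  refine ⟨by simp [mul_comm], Gp.ncard_neighborSet_le hp2, fun _ _ => (Gp.isIOC hp2).neighborSet_ne,
    Gp.noFourCycle hp2 hp4, iocNumber_eq_of_isIOC (Gp.isIOC hp2) ?_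
      fun _ => Gp.card_le_of_isIOC hp2⟩
  simp [card_product, mul_comm]
end
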